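/- arXiv:2003.12106 — 5 statements merged into one kernel-verified Lean document; each statement's English description precedes it below -/
import Mathlib

section
/- If the predicate Q is α-constructible using M and P ▷ Q ⊢ v : σ ⇝ Valid for a 0-order type σ, then v is σ-constructible using M. -/
/-!  Formalization of the core calculus and definitions from
"Data-Driven Inference of Representation Invariants". -/

namespace RepInv

/-- Types: base type β, the abstract type α, products, and functions. -/
inductive Ty : Type
  | base : Ty
  | abs : Ty
  | prod : Ty → Ty → Ty
  | arrow : Ty → Ty → Ty

/-- 0-order types: σ ::= β | α | σ×σ. -/
inductive Ty.IsZero : Ty → Prop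
  | base : Ty.IsZero .base
  | abs : Ty.IsZero .abs
  | prod {σ₁ σ₂ : Ty} : Ty.IsZero σ₁ → Ty.IsZero σ₂ → Ty.IsZero (.prod σ₁ σ₂)

/-- 1st-order types: τ ::= σ | σ→τ | τ×τ. -/
inductive Ty.IsFirst : Ty → Prop
  | zero {σ : Ty} : Ty.IsZero σ → Ty.IsFirst σ
  | arrow {σ₁ τ₂ : Ty} : Ty.IsZero σ₁ → Ty.IsFirst τ₂ → Ty.IsFirst (.arrow σ₁ τ₂)
  | prod {τ₁ τ₂ : Ty} : Ty.IsFirst τ₁ → Ty.IsFirst τ₂ → Ty.IsFirst (.prod τ₁ τ₂)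

/-- Substitution of the concrete type `τc` for the abstract type α: τ[α↦τc]. -/
def Ty.substAbs : Ty → Ty → Ty
  | .base, _ => .base
  | .abs, τc => τc
  | .prod τ₁ τ₂, τc => .prod (τ₁.substAbs τc) (τ₂.substAbs τc)
  | .arrow τ₁ τ₂, τc => .arrow (τ₁.substAbs τc) (τ₂.substAbs τc)

/-- A type is closed (concrete) iff it does not mention the abstract type α. -/
def Ty.Closed : Ty → Prop
  | .base => True
  | .abs => False
  | .prod τ₁ τ₂ => τ₁.Closed ∧ τ₂.Closed
  | .arrow τ₁ τ₂ => τ₁.Closed ∧ τ₂.Closed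

/-- Expressions (with de Bruijn indices): variables, base constants `w`,
pairs, lambdas, projections and applications. -/
inductive Exp : Type
  | var : Nat → Exp
  | const : Nat → Exp
  | pair : Exp → Exp → Exp
  | lam : Ty → Exp → Exp
  | proj : Bool → Exp → Exp
  | app : Exp → Exp → Exp

/-- Values v ::= w | (v₁,v₂) | λx:σ.e. -/
inductive Exp.IsValue : Exp → Prop
  | const {w : Nat} : Exp.IsValue (.const w)
  | pair {v₁ v₂ : Exp} : Exp.IsValue v₁ → Exp.IsValue v₂ → Exp.IsValue (.pair v₁ v₂)
  | lam {σ : Ty} {e : Exp} : Exp.IsValue (.lam σ e)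

/-- Substitution of a closed expression `s` for variable `k`. -/
def Exp.subst : Exp → Nat → Exp → Exp
  | .var n, k, s => if n = k then s else if k < n then .var (n - 1) else .var n
  | .const w, _, _ => .const w
  | .pair e₁ e₂, k, s => .pair (e₁.subst k s) (e₂.subst k s)
  | .lam σ e, k, s => .lam σ (e.subst (k + 1) s)
  | .proj b e, k, s => .proj b (e.subst k s)
  | .app e₁ e₂, k, s => .app (e₁.subst k s) (e₂.subst k s)

/-- The typing judgement Γ ⊢ e : τ. -/
inductive HasType : List Ty → Exp → Ty → Prop
  | var {Γ : List Ty} {n : Nat} {τ : Ty} : Γ[n]? = some τ → HasType Γ (.var n) τ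
  | const {Γ : List Ty} {w : Nat} : HasType Γ (.const w) .base
  | pair {Γ : List Ty} {e₁ e₂ : Exp} {τ₁ τ₂ : Ty} :
      HasType Γ e₁ τ₁ → HasType Γ e₂ τ₂ → HasType Γ (.pair e₁ e₂) (.prod τ₁ τ₂)
  | lam {Γ : List Ty} {σ τ : Ty} {e : Exp} :
      HasType (σ :: Γ) e τ → HasType Γ (.lam σ e) (.arrow σ τ)
  | projl {Γ : List Ty} {e : Exp} {τ₁ τ₂ : Ty} :
      HasType Γ e (.prod τ₁ τ₂) → HasType Γ (.proj false e) τ₁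
  | projr {Γ : List Ty} {e : Exp} {τ₁ τ₂ : Ty} :
      HasType Γ e (.prod τ₁ τ₂) → HasType Γ (.proj true e) τ₂
  | app {Γ : List Ty} {e₁ e₂ : Exp} {τ₁ τ₂ : Ty} :
      HasType Γ e₁ (.arrow τ₁ τ₂) → HasType Γ e₂ τ₁ → HasType Γ (.app e₁ e₂) τ₂

/-- Big-step call-by-value evaluation e ⇓ v. -/
inductive Eval : Exp → Exp → Prop
  | const {w : Nat} : Eval (.const w) (.const w)
  | lam {σ : Ty} {e : Exp} : Eval (.lam σ e) (.lam σ e)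
  | pair {e₁ e₂ v₁ v₂ : Exp} :
      Eval e₁ v₁ → Eval e₂ v₂ → Eval (.pair e₁ e₂) (.pair v₁ v₂)
  | projl {e v₁ v₂ : Exp} : Eval e (.pair v₁ v₂) → Eval (.proj false e) v₁
  | projr {e v₁ v₂ : Exp} : Eval e (.pair v₁ v₂) → Eval (.proj true e) v₂
  | app {e₁ e₂ e v₂ v : Exp} {σ : Ty} :
      Eval e₁ (.lam σ e) → Eval e₂ v₂ → Eval (e.subst 0 v₂) v → Eval (.app e₁ e₂) v

/-- Conditional inductiveness: `Cond τc τ P Q v` formalizes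
`P ▷ Q ⊢ v : τ ⇝ Valid`, where `P` and `Q` are predicates on values of the
concrete type `τc`.  It is defined by recursion on the (first-order) type τ:
(I-B) at β the value is a base constant; (I-A) at α the value is a closed
value of type τc satisfying Q; (I-Prod) products componentwise; (I-Fun) at
σ₁→τ₂ the value is well typed at the substituted type and maps any argument
related with the roles of P and Q swapped to a related result. -/
def Cond (τc : Ty) : Ty → (Exp → Prop) → (Exp → Prop) → Exp → Prop
  | .base, _, _, v => ∃ w, v = Exp.const w
  | .abs, _, Q, v => HasType [] v τc ∧ Q v
  | .prod τ₁ τ₂, P, Q, v =>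
      ∃ v₁ v₂, v = Exp.pair v₁ v₂ ∧ Cond τc τ₁ P Q v₁ ∧ Cond τc τ₂ P Q v₂
  | .arrow σ₁ τ₂, P, Q, v =>
      HasType [] v ((Ty.arrow σ₁ τ₂).substAbs τc) ∧
      ∀ v₁ v₂, Cond τc σ₁ Q P v₁ → Eval (.app v v₁) v₂ → Cond τc τ₂ P Q v₂

/-- `CollectV τc σ v S`: CollectV(σ, v) is defined and equals the set S. -/
inductive CollectV (τc : Ty) : Ty → Exp → Set Exp → Prop
  | base {w : Nat} : CollectV τc .base (.const w) ∅
  | abs {v : Exp} : HasType [] v τc → CollectV τc .abs v {v}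
  | prod {σ₁ σ₂ : Ty} {v₁ v₂ : Exp} {S₁ S₂ : Set Exp} :
      CollectV τc σ₁ v₁ S₁ → CollectV τc σ₂ v₂ S₂ →
      CollectV τc (.prod σ₁ σ₂) (.pair v₁ v₂) (S₁ ∪ S₂)

/-- The refutation relation: `Refute τc P Q v τ S V` formalizes
`P ▷ Q ⊢ v : τ ⇝ (S, V)`, producing counterexample witness sets S and V. -/
inductive Refute (τc : Ty) (P Q : Exp → Prop) : Exp → Ty → Set Exp → Set Exp → Prop
  | abs {v : Exp} : HasType [] v τc → ¬ Q v → Refute τc P Q v .abs ∅ {v}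
  | prodl {v₁ v₂ : Exp} {τ₁ τ₂ : Ty} {S V : Set Exp} :
      Refute τc P Q v₁ τ₁ S V → HasType [] v₂ (τ₂.substAbs τc) →
      Refute τc P Q (.pair v₁ v₂) (.prod τ₁ τ₂) S V
  | prodr {v₁ v₂ : Exp} {τ₁ τ₂ : Ty} {S V : Set Exp} :
      HasType [] v₁ (τ₁.substAbs τc) → Refute τc P Q v₂ τ₂ S V →
      Refute τc P Q (.pair v₁ v₂) (.prod τ₁ τ₂) S V
  | fn {v v₁ v₂ : Exp} {σ₁ τ₂ : Ty} {S V S₁ : Set Exp} :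
      HasType [] v ((Ty.arrow σ₁ τ₂).substAbs τc) →
      Cond τc σ₁ Q P v₁ → Eval (.app v v₁) v₂ →
      Refute τc P Q v₂ τ₂ S V → CollectV τc σ₁ v₁ S₁ →
      Refute τc P Q v (.arrow σ₁ τ₂) (S₁ ∪ S) V

/-- A module implementation M = ⟨τc, vm⟩ for the interface F = ∃α.τm:
a closed concrete type τc together with operations vm of type τm[α↦τc]. -/
structure Module where
  τc : Ty
  τm : Ty
  vm : Exp
  closed : τc.Closed
  first : τm.IsFirst
  wt : HasType [] vm (τm.substAbs τc)

/-- `v` is τ-constructible using M: there is a client f : ∀α. τm → τ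
(an expression typed with α held abstract) with f[τc] vm ⇓ v. -/
def Constructible (M : Module) (v : Exp) (τ : Ty) : Prop :=
  ∃ f : Exp, HasType [] f (.arrow M.τm τ) ∧ Eval (.app f M.vm) v

/-- A set is α-constructible iff each of its elements is. -/
def ConstructibleSet (M : Module) (S : Set Exp) : Prop :=
  ∀ v ∈ S, Constructible M v .abs

/-- A predicate is α-constructible iff every value satisfying it is. -/
def ConstructiblePred (M : Module) (p : Exp → Prop) : Prop :=
  ∀ v, p v → Constructible M v .abs

/-- A specification is modeled semantically by the predicate
`φ v` ≡ “φ[τc] vm v holds”, for a polymorphic φ : ∀α. τm → α → bool.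
A predicate p is sufficient for φ and M iff p v implies φ[τc] vm v
for all values v of type τc. -/
def Sufficient (M : Module) (φ : Exp → Prop) (p : Exp → Prop) : Prop :=
  ∀ v : Exp, HasType [] v M.τc → p v → φ v

/-- I is a sufficient representation invariant for M w.r.t. φ:
I is sufficient for φ and M, and I ▷ I ⊢ vm : τm ⇝ Valid. -/
def SuffRepInv (M : Module) (φ : Exp → Prop) (I : Exp → Prop) : Prop :=
  Sufficient M φ I ∧ Cond M.τc M.τm I I M.vm

/-- The set of closed values of a (concrete) type. -/
def ClosedVals (τc : Ty) : Set Exp := {v | v.IsValue ∧ HasType [] v τc}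

/-- Result of a verifier call: Valid, or a counterexample value. -/
inductive VResult : Type
  | valid : VResult
  | cex : Exp → VResult

/-- Result of a CondInductive call: Valid, or witness sets (S, V). -/
inductive CIResult : Type
  | valid : CIResult
  | cex : Set Exp → Set Exp → CIResult

/-- Result of ClosedPositives: Valid, or a set V of new positive examples. -/
inductive CPResult : Type
  | valid : CPResult
  | cex : Set Exp → CPResult

/-- Result of NoNegatives: Valid, or a set S of new negative examples. -/
inductive NNResult : Type
  | valid : NNResult
  | cex : Set Exp → NNResult

/-- Verify is sound: Verify P = Valid implies P v for all values v of type τc. -/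
def VerifySound (M : Module) (Vf : (Exp → Prop) → VResult) : Prop :=
  ∀ P : Exp → Prop, Vf P = .valid → ∀ v : Exp, HasType [] v M.τc → P v

/-- Verify is complete: Verify P = v implies v is a value of type τc with ¬ P v. -/
def VerifyComplete (M : Module) (Vf : (Exp → Prop) → VResult) : Prop :=
  ∀ (P : Exp → Prop) (v : Exp), Vf P = .cex v → HasType [] v M.τc ∧ ¬ P v

/-- Synth is sound: any returned predicate maps every element of V+ to true
and every element of V- to false. -/
def SynthSound (Sy : Set Exp → Set Exp → Option (Exp → Prop)) : Prop :=
  ∀ (Vp Vm : Set Exp) (P : Exp → Prop), Sy Vp Vm = some P →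
    (∀ v ∈ Vp, P v) ∧ (∀ v ∈ Vm, ¬ P v)

/-- Synth is complete: whenever a separating predicate exists, Synth returns
some predicate. -/
def SynthComplete (Sy : Set Exp → Set Exp → Option (Exp → Prop)) : Prop :=
  ∀ Vp Vm : Set Exp,
    (∃ P : Exp → Prop, (∀ v ∈ Vp, P v) ∧ (∀ v ∈ Vm, ¬ P v)) →
    ∃ P : Exp → Prop, Sy Vp Vm = some P

/-- CondInductive P Q returns the result R such that P ▷ Q ⊢ vm : τm ⇝ R. -/
def CICorrect (M : Module) (CI : (Exp → Prop) → (Exp → Prop) → CIResult) : Prop :=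
  ∀ P Q : Exp → Prop,
    (CI P Q = .valid → Cond M.τc M.τm P Q M.vm) ∧
    (∀ S V : Set Exp, CI P Q = .cex S V → Refute M.τc P Q M.vm M.τm S V)

/-- ClosedPositives V+ I: Valid if CondInductive V+ I = Valid, and
CounterExample V if CondInductive V+ I = (S, V). -/
def ClosedPositives (CI : (Exp → Prop) → (Exp → Prop) → CIResult)
    (Vp : Set Exp) (I : Exp → Prop) : CPResult :=
  match CI (fun v => v ∈ Vp) I with
  | .valid => .valid
  | .cex _ V => .cex V

/-- NoNegatives I: first Verify the sufficiency claim for I; on a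
counterexample v return CounterExample {v}; otherwise if
CondInductive I I = Valid return Valid, and if CondInductive I I = (S, V)
return CounterExample S. -/
def NoNegatives (φ : Exp → Prop) (Vf : (Exp → Prop) → VResult)
    (CI : (Exp → Prop) → (Exp → Prop) → CIResult) (I : Exp → Prop) : NNResult :=
  match Vf (fun v => I v → φ v) with
  | .cex v => .cex {v}
  | .valid =>
    match CI I I with
    | .valid => .valid
    | .cex S _ => .cex S

/-- Possible outcomes of the Hanoi algorithm. -/
inductive HanoiResult : Type
  | invariant : (Exp → Prop) → HanoiResult
  | cex : Set Exp → HanoiResult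
  | failure : HanoiResult

/-- Big-step semantics of the Hanoi algorithm: `HanoiRun φ Vf Sy CI V+ V- r`
holds iff the call Hanoi V+ V- terminates with result r. -/
inductive HanoiRun (φ : Exp → Prop) (Vf : (Exp → Prop) → VResult)
    (Sy : Set Exp → Set Exp → Option (Exp → Prop))
    (CI : (Exp → Prop) → (Exp → Prop) → CIResult) :
    Set Exp → Set Exp → HanoiResult → Prop
  | synthFail {Vp Vm : Set Exp} :
      Sy Vp Vm = none → HanoiRun φ Vf Sy CI Vp Vm .failure
  | weaken {Vp Vm P : Set Exp} {I : Exp → Prop} {r : HanoiResult} :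
      Sy Vp Vm = some I → ClosedPositives CI Vp I = .cex P →
      HanoiRun φ Vf Sy CI (Vp ∪ P) ∅ r →
      HanoiRun φ Vf Sy CI Vp Vm r
  | specCex {Vp Vm N : Set Exp} {I : Exp → Prop} :
      Sy Vp Vm = some I → ClosedPositives CI Vp I = .valid →
      NoNegatives φ Vf CI I = .cex N → N \ Vp = ∅ →
      HanoiRun φ Vf Sy CI Vp Vm (.cex N)
  | strengthen {Vp Vm N : Set Exp} {I : Exp → Prop} {r : HanoiResult} :
      Sy Vp Vm = some I → ClosedPositives CI Vp I = .valid →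
      NoNegatives φ Vf CI I = .cex N → N \ Vp ≠ ∅ →
      HanoiRun φ Vf Sy CI Vp (Vm ∪ (N \ Vp)) r →
      HanoiRun φ Vf Sy CI Vp Vm r
  | done {Vp Vm : Set Exp} {I : Exp → Prop} :
      Sy Vp Vm = some I → ClosedPositives CI Vp I = .valid →
      NoNegatives φ Vf CI I = .valid →
      HanoiRun φ Vf Sy CI Vp Vm (.invariant I)

/-- The rank function R(V+, V-) = (|τc| − |V+|, |τc| − |V-|). -/
noncomputable def rank (τc : Ty) (Vp Vm : Set Exp) : Nat × Nat :=
  ((ClosedVals τc).ncard - Vp.ncard, (ClosedVals τc).ncard - Vm.ncard)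

/-!
The proof is an induction on the 0-order type σ. At α the hypothesis gives `Q v`, and `Q` is
α-constructible. At β the constant client `λ_ : τm. w` works, and at a product the clients
`f₁, f₂` of the components combine into `λx : τm. (f₁ x, f₂ x)`; this is sound because
`vm` evaluates deterministically. The client `λ_ : τm. w` needs `vm` to evaluate to some value,
which is weak normalization of the calculus, proved with a unary logical relation.
-/

namespace Exp

def ClosedUnder : Nat → Exp → Prop
  | k, .var n => n < k
  | _, .const _ => True
  | k, .pair e₁ e₂ => e₁.ClosedUnder k ∧ e₂.ClosedUnder k
  | k, .lam _ e => e.ClosedUnder (k + 1)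
  | k, .proj _ e => e.ClosedUnder k
  | k, .app e₁ e₂ => e₁.ClosedUnder k ∧ e₂.ClosedUnder k

theorem ClosedUnder.mono {e : Exp} {j k : Nat} (h : e.ClosedUnder j) (hjk : j ≤ k) :
    e.ClosedUnder k := by
  induction e generalizing j k with
  | var n => exact Nat.lt_of_lt_of_le h hjk
  | const => trivial
  | pair _ _ ih₁ ih₂ | app _ _ ih₁ ih₂ => exact ⟨ih₁ h.1 hjk, ih₂ h.2 hjk⟩
  | lam _ _ ih => exact ih h (Nat.succ_le_succ hjk)
  | proj _ _ ih => exact ih h hjk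

theorem subst_eq_self {e s : Exp} {j k : Nat} (h : e.ClosedUnder k) (hkj : k ≤ j) :
    e.subst j s = e := by
  induction e generalizing j k with
  | var n =>
    simp only [ClosedUnder] at h
    simp only [subst, if_neg (by omega : n ≠ j), if_neg (by omega : ¬j < n)]
  | const => rfl
  | pair _ _ ih₁ ih₂ | app _ _ ih₁ ih₂ => simp only [subst, ih₁ h.1 hkj, ih₂ h.2 hkj]
  | lam _ _ ih => simp only [subst, ih h (Nat.succ_le_succ hkj)]
  | proj _ _ ih => simp only [subst, ih h hkj]

theorem ClosedUnder.subst {e s : Exp} {j k : Nat} (he : e.ClosedUnder (j + 1))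
    (hs : s.ClosedUnder 0) (hkj : k ≤ j) : (e.subst k s).ClosedUnder j := by
  induction e generalizing j k with
  | var n =>
    simp only [ClosedUnder] at he
    simp only [Exp.subst]
    split
    · exact hs.mono (Nat.zero_le j)
    · split <;> simp only [ClosedUnder] <;> omega
  | const => trivial
  | pair _ _ ih₁ ih₂ | app _ _ ih₁ ih₂ => exact ⟨ih₁ he.1 hkj, ih₂ he.2 hkj⟩
  | lam _ _ ih => exact ih he (Nat.succ_le_succ hkj)
  | proj _ _ ih => exact ih he hkj

theorem subst_subst_comm {s t : Exp} (hs : s.ClosedUnder 0) (ht : t.ClosedUnder 0) (e : Exp)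
    (k : Nat) : (e.subst (k + 1) s).subst k t = (e.subst k t).subst k s := by
  induction e generalizing k with
  | var n =>
    simp only [Exp.subst]
    split_ifs <;> simp only [Exp.subst, subst_eq_self hs (Nat.zero_le k),
      subst_eq_self ht (Nat.zero_le k)] <;> (try split_ifs) <;> first | rfl | omega
  | const => rfl
  | pair _ _ ih₁ ih₂ | app _ _ ih₁ ih₂ => simp only [Exp.subst, ih₁ k, ih₂ k]
  | lam _ _ ih => simp only [Exp.subst, ih (k + 1)]
  | proj _ _ ih => simp only [Exp.subst, ih k]

/-- Simultaneous substitution of closed expressions: `ρ[i]` replaces the index `k + i`. -/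
def substList : Exp → Nat → List Exp → Exp
  | e, _, [] => e
  | e, k, s :: ρ => (e.subst k s).substList k ρ

section substList

variable {k : Nat} {ρ : List Exp}

theorem substList_const (w : Nat) : (const w).substList k ρ = const w := by
  induction ρ <;> simp_all [substList, subst]

theorem substList_pair (e₁ e₂ : Exp) :
    (pair e₁ e₂).substList k ρ = pair (e₁.substList k ρ) (e₂.substList k ρ) := by
  induction ρ generalizing e₁ e₂ <;> simp_all [substList, subst]

theorem substList_lam (σ : Ty) (e : Exp) :
    (lam σ e).substList k ρ = lam σ (e.substList (k + 1) ρ) := by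
  induction ρ generalizing e <;> simp_all [substList, subst]

theorem substList_proj (b : Bool) (e : Exp) :
    (proj b e).substList k ρ = proj b (e.substList k ρ) := by
  induction ρ generalizing e <;> simp_all [substList, subst]

theorem substList_app (e₁ e₂ : Exp) :
    (app e₁ e₂).substList k ρ = app (e₁.substList k ρ) (e₂.substList k ρ) := by
  induction ρ generalizing e₁ e₂ <;> simp_all [substList, subst]

theorem substList_eq_self {e : Exp} (he : e.ClosedUnder 0) : e.substList k ρ = e := by
  induction ρ with
  | nil => rfl
  | cons s ρ ih => rw [substList, subst_eq_self he (Nat.zero_le k), ih]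

theorem substList_var (hρ : ∀ s ∈ ρ, s.ClosedUnder 0) {n : Nat} {u : Exp}
    (hn : ρ[n]? = some u) : (var n).substList 0 ρ = u := by
  induction ρ generalizing n with
  | nil => simp at hn
  | cons s ρ ih =>
    rw [List.forall_mem_cons] at hρ
    cases n with
    | zero =>
      obtain rfl : s = u := by simpa using hn
      simp [substList, subst, substList_eq_self hρ.1]
    | succ n => simpa [substList, subst] using ih hρ.2 (by simpa using hn)

theorem subst_substList {s : Exp} (hs : s.ClosedUnder 0) (hρ : ∀ t ∈ ρ, t.ClosedUnder 0)
    (e : Exp) : (e.substList (k + 1) ρ).subst k s = (e.subst k s).substList k ρ := by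
  induction ρ generalizing e with
  | nil => rfl
  | cons t ρ ih =>
    rw [List.forall_mem_cons] at hρ
    simp only [substList]
    rw [ih hρ.2, subst_subst_comm hρ.1 hs]

theorem ClosedUnder.substList {e : Exp} (he : e.ClosedUnder (k + ρ.length))
    (hρ : ∀ s ∈ ρ, s.ClosedUnder 0) : (e.substList k ρ).ClosedUnder k := by
  induction ρ generalizing e with
  | nil => exact he
  | cons s ρ ih =>
    rw [List.forall_mem_cons] at hρ
    rw [List.length_cons, ← Nat.add_assoc] at he
    exact ih (he.subst hρ.1 (Nat.le_add_right k _)) hρ.2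

end substList

end Exp

namespace HasType

variable {Γ : List Ty} {e : Exp} {τ : Ty}

theorem closedUnder (h : HasType Γ e τ) : e.ClosedUnder Γ.length := by
  induction h with
  | var h => exact (List.getElem?_eq_some_iff.mp h).1
  | const => trivial
  | pair _ _ ih₁ ih₂ | app _ _ ih₁ ih₂ => exact ⟨ih₁, ih₂⟩
  | lam _ ih | projl _ ih | projr _ ih => exact ih

theorem weaken (h : HasType Γ e τ) (Δ : List Ty) : HasType (Γ ++ Δ) e τ := by
  induction h with
  | var h => exact .var (by rw [List.getElem?_append_left (List.getElem?_eq_some_iff.mp h).1, h])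
  | const => exact .const
  | pair _ _ ih₁ ih₂ => exact .pair ih₁ ih₂
  | lam _ ih => exact .lam ih
  | projl _ ih => exact .projl ih
  | projr _ ih => exact .projr ih
  | app _ _ ih₁ ih₂ => exact .app ih₁ ih₂

end HasType

namespace Eval

theorem eval_self {e v : Exp} (h : Eval e v) : Eval v v := by
  induction h with
  | const => exact .const
  | lam => exact .lam
  | pair _ _ ih₁ ih₂ => exact .pair ih₁ ih₂
  | projl _ ih | projr _ ih => cases ih; assumption
  | app _ _ _ _ _ ih => exact ih

theorem det {e v v' : Exp} (h : Eval e v) (h' : Eval e v') : v = v' := by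
  induction h generalizing v' with
  | const | lam => cases h'; rfl
  | pair _ _ ih₁ ih₂ => cases h' with | pair h₁ h₂ => rw [ih₁ h₁, ih₂ h₂]
  | projl _ ih => cases h' with | projl h₁ => exact (Exp.pair.inj (ih h₁)).1
  | projr _ ih => cases h' with | projr h₁ => exact (Exp.pair.inj (ih h₁)).2
  | app _ _ _ ih₁ ih₂ ih₃ =>
    cases h' with
    | app h₁ h₂ h₃ =>
      obtain ⟨rfl, rfl⟩ := Exp.lam.inj (ih₁ h₁)
      obtain rfl := ih₂ h₂
      exact ih₃ h₃

theorem app_of_eval_arg {f a u v : Exp} (h : Eval (.app f a) v) (ha : Eval a u) :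
    Eval (.app f u) v := by
  cases h with
  | app hf ha' hb =>
    obtain rfl := ha'.det ha
    exact .app hf ha.eval_self hb

end Eval

theorem _root_.List.Forall₂.exists_getElem? {α β : Type*} {R : α → β → Prop} {l₁ : List α}
    {l₂ : List β} (h : List.Forall₂ R l₁ l₂) {n : Nat} {a : α} (hn : l₁[n]? = some a) :
    ∃ b, l₂[n]? = some b ∧ R a b := by
  induction h generalizing n with
  | nil => simp at hn
  | cons hab _ ih =>
    cases n with
    | zero => obtain rfl := Option.some.inj hn; exact ⟨_, rfl, hab⟩
    | succ n => exact ih hn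

/-- The logical relation of the weak normalization proof. -/
def SemVal : Ty → Exp → Prop
  | .base, v => ∃ w, v = .const w
  | .abs, _ => False
  | .prod τ₁ τ₂, v => ∃ v₁ v₂, v = .pair v₁ v₂ ∧ SemVal τ₁ v₁ ∧ SemVal τ₂ v₂
  | .arrow τ₁ τ₂, v => ∃ σ b, v = .lam σ b ∧ b.ClosedUnder 1 ∧
      ∀ v₁, SemVal τ₁ v₁ → ∃ v₂, Eval (b.subst 0 v₁) v₂ ∧ SemVal τ₂ v₂

namespace SemVal

theorem closedUnder {τ : Ty} {v : Exp} (h : SemVal τ v) : v.ClosedUnder 0 := by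
  induction τ generalizing v with
  | base => obtain ⟨w, rfl⟩ := h; trivial
  | abs => exact h.elim
  | prod τ₁ τ₂ ih₁ ih₂ => obtain ⟨v₁, v₂, rfl, h₁, h₂⟩ := h; exact ⟨ih₁ h₁, ih₂ h₂⟩
  | arrow => obtain ⟨σ, b, rfl, hb, -⟩ := h; exact hb

theorem eval_self {τ : Ty} {v : Exp} (h : SemVal τ v) : Eval v v := by
  induction τ generalizing v with
  | base => obtain ⟨w, rfl⟩ := h; exact .const
  | abs => exact h.elim
  | prod τ₁ τ₂ ih₁ ih₂ => obtain ⟨v₁, v₂, rfl, h₁, h₂⟩ := h; exact .pair (ih₁ h₁) (ih₂ h₂)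
  | arrow => obtain ⟨σ, b, rfl, -⟩ := h; exact .lam

theorem closedUnder_of_forall₂ {Γ : List Ty} {ρ : List Exp} (hρ : List.Forall₂ SemVal Γ ρ) :
    ∀ s ∈ ρ, s.ClosedUnder 0 := by
  induction hρ with
  | nil => simp
  | cons h _ ih => exact List.forall_mem_cons.mpr ⟨h.closedUnder, ih⟩

end SemVal

/-- The fundamental lemma of the logical relation `SemVal`. -/
theorem HasType.exists_eval_substList {Γ : List Ty} {e : Exp} {τ : Ty} (ht : HasType Γ e τ)
    {ρ : List Exp} (hρ : List.Forall₂ SemVal Γ ρ) :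
    ∃ v, Eval (e.substList 0 ρ) v ∧ SemVal τ v := by
  induction ht generalizing ρ with
  | var h =>
    obtain ⟨v, hv, hsem⟩ := hρ.exists_getElem? h
    rw [Exp.substList_var (SemVal.closedUnder_of_forall₂ hρ) hv]
    exact ⟨v, hsem.eval_self, hsem⟩
  | const => exact ⟨_, by rw [Exp.substList_const]; exact .const, _, rfl⟩
  | pair _ _ ih₁ ih₂ =>
    obtain ⟨v₁, hv₁, hs₁⟩ := ih₁ hρ
    obtain ⟨v₂, hv₂, hs₂⟩ := ih₂ hρ
    exact ⟨_, by rw [Exp.substList_pair]; exact .pair hv₁ hv₂, v₁, v₂, rfl, hs₁, hs₂⟩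
  | @lam Γ σ τ e he ih =>
    have hρcl := SemVal.closedUnder_of_forall₂ hρ
    have hbody : (e.substList 1 ρ).ClosedUnder 1 := by
      refine Exp.ClosedUnder.substList ?_ hρcl
      simpa [hρ.length_eq, Nat.add_comm] using he.closedUnder
    refine ⟨_, by rw [Exp.substList_lam]; exact .lam, σ, _, rfl, hbody, fun v₁ hs₁ => ?_⟩
    obtain ⟨v₂, hv₂, hs₂⟩ := ih (.cons hs₁ hρ)
    exact ⟨v₂, by rwa [Exp.subst_substList hs₁.closedUnder hρcl], hs₂⟩
  | projl _ ih =>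
    obtain ⟨_, hv, v₁, v₂, rfl, hs₁, -⟩ := ih hρ
    exact ⟨v₁, by rw [Exp.substList_proj]; exact .projl hv, hs₁⟩
  | projr _ ih =>
    obtain ⟨_, hv, v₁, v₂, rfl, -, hs₂⟩ := ih hρ
    exact ⟨v₂, by rw [Exp.substList_proj]; exact .projr hv, hs₂⟩
  | app _ _ ih₁ ih₂ =>
    obtain ⟨_, hf, σ, b, rfl, -, hfun⟩ := ih₁ hρ
    obtain ⟨a, ha, hsa⟩ := ih₂ hρ
    obtain ⟨v, hv, hs⟩ := hfun a hsa
    exact ⟨v, by rw [Exp.substList_app]; exact .app hf ha hv, hs⟩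

theorem HasType.exists_eval {e : Exp} {τ : Ty} (ht : HasType [] e τ) : ∃ v, Eval e v :=
  (ht.exists_eval_substList .nil).imp fun _ h => h.1

namespace Constructible

variable {M : Module}

theorem const (w : Nat) : Constructible M (.const w) .base := by
  obtain ⟨u, hu⟩ := M.wt.exists_eval
  exact ⟨.lam M.τm (.const w), .lam .const, .app .lam hu .const⟩

theorem pair {v₁ v₂ : Exp} {σ₁ σ₂ : Ty} (h₁ : Constructible M v₁ σ₁)
    (h₂ : Constructible M v₂ σ₂) : Constructible M (.pair v₁ v₂) (.prod σ₁ σ₂) := by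
  obtain ⟨f₁, hf₁, he₁⟩ := h₁
  obtain ⟨f₂, hf₂, he₂⟩ := h₂
  obtain ⟨u, hu⟩ := M.wt.exists_eval
  have hbody : (Exp.pair (.app f₁ (.var 0)) (.app f₂ (.var 0))).subst 0 u =
      .pair (.app f₁ u) (.app f₂ u) := by
    simp only [Exp.subst, Exp.subst_eq_self hf₁.closedUnder (Nat.le_refl 0),
      Exp.subst_eq_self hf₂.closedUnder (Nat.le_refl 0), if_pos]
  refine ⟨.lam M.τm (.pair (.app f₁ (.var 0)) (.app f₂ (.var 0))),
    .lam (.pair (.app (hf₁.weaken _) (.var rfl)) (.app (hf₂.weaken _) (.var rfl))),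
    .app .lam hu ?_⟩
  rw [hbody]
  exact .pair (he₁.app_of_eval_arg hu) (he₂.app_of_eval_arg hu)

end Constructible

/-- if Q is α-constructible using M and P ▷ Q ⊢ v : σ ⇝ Valid for
a 0-order type σ, then v is σ-constructible using M. -/
theorem cond_constructible (M : Module) (P Q : Exp → Prop) (σ : Ty) (v : Exp)
    (hσ : σ.IsZero) (hQ : ConstructiblePred M Q)
    (h : Cond M.τc σ P Q v) :
    Constructible M v σ := by
  induction hσ generalizing v with
  | base =>
    obtain ⟨w, rfl⟩ := h
    exact .const w
  | abs => exact hQ v h.2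
  | prod _ _ ih₁ ih₂ =>
    obtain ⟨v₁, v₂, rfl, h₁, h₂⟩ := h
    exact (ih₁ v₁ h₁).pair (ih₂ v₂ h₂)

end RepInv
end

section
/- If P ▷ Q ⊢ v : τ ⇝ (S, V), then (i) every x ∈ S satisfies P x, (ii) V is nonempty, and (iii) every x ∈ V satisfies ¬ Q x. -/
/-!  Formalization of the core calculus and definitions from
"Data-Driven Inference of Representation Invariants". -/

namespace RepInv

lemma CollectV.forall_of_cond {τc σ : Ty} {P Q : Exp → Prop} {v : Exp} {S : Set Exp}
    (h : CollectV τc σ v S) (hc : Cond τc σ P Q v) : ∀ x ∈ S, Q x := by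
  induction h with
  | base => simp
  | abs _ => simpa using hc.2
  | prod _ _ ih₁ ih₂ =>
    obtain ⟨_, _, ⟨⟩, hc₁, hc₂⟩ := hc
    rintro x (hx | hx)
    exacts [ih₁ hc₁ x hx, ih₂ hc₂ x hx]

namespace Refute

variable {τc τ : Ty} {P Q : Exp → Prop} {v : Exp} {S V : Set Exp}

/-- The argument of each `I-Fun-CEx` step satisfies `Q ▷ P`, so its collected α-values satisfy `P`. -/
lemma pre_of_mem (h : Refute τc P Q v τ S V) : ∀ x ∈ S, P x := by
  induction h with
  | abs => simp
  | prodl _ _ ih | prodr _ _ ih => exact ih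
  | fn _ hc _ _ hcoll ih =>
    rintro x (hx | hx)
    exacts [hcoll.forall_of_cond hc x hx, ih x hx]

lemma nonempty (h : Refute τc P Q v τ S V) : V.Nonempty := by
  induction h with
  | abs => exact Set.singleton_nonempty _
  | prodl _ _ ih | prodr _ _ ih | fn _ _ _ _ _ ih => exact ih

lemma not_post_of_mem (h : Refute τc P Q v τ S V) : ∀ x ∈ V, ¬ Q x := by
  induction h with
  | abs _ hq => simpa using hq
  | prodl _ _ ih | prodr _ _ ih | fn _ _ _ _ _ ih => exact ih

end Refute

theorem refute_counterexample_general (τc τ : Ty) (P Q : Exp → Prop) (v : Exp)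
    (S V : Set Exp) (h : Refute τc P Q v τ S V) :
    (∀ x ∈ S, P x) ∧ V.Nonempty ∧ (∀ x ∈ V, ¬ Q x) :=
  ⟨h.pre_of_mem, h.nonempty, h.not_post_of_mem⟩

/-- if P ▷ Q ⊢ v : τ ⇝ (S, V) then (i) every x ∈ S satisfies P x,
(ii) V is nonempty, and (iii) every x ∈ V satisfies ¬ Q x. -/
theorem refute_counterexample (τc τ : Ty) (P Q : Exp → Prop) (v : Exp)
    (S V : Set Exp) (hτ : τ.IsFirst) (h : Refute τc P Q v τ S V) :
    (∀ x ∈ S, P x) ∧ V.Nonempty ∧ (∀ x ∈ V, ¬ Q x) :=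
  refute_counterexample_general τc τ P Q v S V h

end RepInv
end

section
/- If v is τ-constructible using M, the predicate P is α-constructible using M, and P ▷ Q ⊢ v : τ ⇝ (S, V), then every element of V is α-constructible using M. -/
/-!  Formalization of the core calculus and definitions from
"Data-Driven Inference of Representation Invariants". -/

namespace RepInv

/-!
A refutation `P ▷ Q ⊢ v : τ ⇝ (S, V)` descends into `v` along projections of pairs and
applications to arguments `v₁` with `Q ▷ P ⊢ v₁ : σ₁ ⇝ Valid`, and collects `V` at a leaf
of type α. Constructible values are closed under projections and applications, and since
`σ₁` is 0-order, such an argument `v₁` is assembled from base constants and values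
satisfying `P`, hence is constructible. So every value met along the descent, in particular
every element of `V`, is constructible.
-/

theorem Eval.isValue {e v : Exp} (h : Eval e v) : v.IsValue := by
  induction h with
  | const => exact .const
  | lam => exact .lam
  | pair _ _ ih₁ ih₂ => exact .pair ih₁ ih₂
  | projl _ ih => cases ih; assumption
  | projr _ ih => cases ih; assumption
  | app _ _ _ _ _ ih => exact ih

theorem Exp.IsValue.eval_self {v : Exp} (h : v.IsValue) : Eval v v := by
  induction h with
  | const => exact .const
  | lam => exact .lam
  | pair _ _ ih₁ ih₂ => exact .pair ih₁ ih₂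

theorem Eval.det_s8 {e v v' : Exp} (h : Eval e v) (h' : Eval e v') : v = v' := by
  induction h generalizing v' with
  | const => cases h'; rfl
  | lam => cases h'; rfl
  | pair _ _ ih₁ ih₂ => cases h' with
    | pair h₁ h₂ => rw [ih₁ h₁, ih₂ h₂]
  | projl _ ih => cases h' with
    | projl h₁ => injection ih h₁
  | projr _ ih => cases h' with
    | projr h₁ => injection ih h₁
  | app _ _ _ ih₁ ih₂ ih₃ => cases h' with
    | app g₁ g₂ g₃ =>
      injection ih₁ g₁ with hσ hbody
      subst hσ hbody
      rw [← ih₂ g₂] at g₃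
      exact ih₃ g₃

theorem Eval.trans {e v w : Exp} (h : Eval e v) (h' : Eval v w) : Eval e w := by
  rwa [h'.det_s8 h.isValue.eval_self]

theorem HasType.subst_eq_self {Γ : List Ty} {e : Exp} {τ : Ty} (h : HasType Γ e τ)
    {k : Nat} (hk : Γ.length ≤ k) (s : Exp) : e.subst k s = e := by
  induction h generalizing k with
  | var hn =>
    have hlt := (List.getElem?_eq_some_iff.mp hn).1
    rw [Exp.subst, if_neg (by omega), if_neg (by omega)]
  | const => rfl
  | pair _ _ ih₁ ih₂ => simp [Exp.subst, ih₁ hk, ih₂ hk]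
  | lam _ ih => simp [Exp.subst, ih (show _ ≤ k + 1 by simpa using hk)]
  | projl _ ih => simp [Exp.subst, ih hk]
  | projr _ ih => simp [Exp.subst, ih hk]
  | app _ _ ih₁ ih₂ => simp [Exp.subst, ih₁ hk, ih₂ hk]

theorem HasType.append {Γ : List Ty} {e : Exp} {τ : Ty} (h : HasType Γ e τ) (Δ : List Ty) :
    HasType (Γ ++ Δ) e τ := by
  induction h with
  | var hn =>
    refine .var ?_
    rw [List.getElem?_append_left (List.getElem?_eq_some_iff.mp hn).1, hn]
  | const => exact .const
  | pair _ _ ih₁ ih₂ => exact .pair ih₁ ih₂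
  | lam _ ih => exact .lam ih
  | projl _ ih => exact .projl ih
  | projr _ ih => exact .projr ih
  | app _ _ ih₁ ih₂ => exact .app ih₁ ih₂

theorem Ty.IsFirst.prod_inv {τ₁ τ₂ : Ty} (h : (Ty.prod τ₁ τ₂).IsFirst) :
    τ₁.IsFirst ∧ τ₂.IsFirst := by
  rcases h with ⟨⟨⟩⟩ | _ | ⟨h₁, h₂⟩
  · exact ⟨.zero ‹_›, .zero ‹_›⟩
  · exact ⟨h₁, h₂⟩

theorem Ty.IsFirst.arrow_inv {σ τ : Ty} (h : (Ty.arrow σ τ).IsFirst) :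
    σ.IsZero ∧ τ.IsFirst := by
  rcases h with ⟨⟨⟩⟩ | ⟨hσ, hτ⟩
  exact ⟨hσ, hτ⟩

/-- `v` is computed by a client body `e : τ` whose free variable `0` stands for the operations,
once that variable is instantiated by their value `u`. -/
def ConstructibleFrom (M : Module) (u v : Exp) (τ : Ty) : Prop :=
  ∃ e : Exp, HasType [M.τm] e τ ∧ Eval (e.subst 0 u) v

theorem constructible_iff_constructibleFrom {M : Module} {u v : Exp} {τ : Ty}
    (hu : Eval M.vm u) : Constructible M v τ ↔ ConstructibleFrom M u v τ := by
  constructor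
  · rintro ⟨f, hf, hev⟩
    cases hev with
    | app hlam hu' hbody =>
      cases hu.det_s8 hu'
      refine ⟨.app f (.var 0), .app (hf.append [M.τm]) (.var rfl), ?_⟩
      simp only [Exp.subst, hf.subst_eq_self (Nat.le_refl 0), reduceIte]
      exact .app hlam hu.isValue.eval_self hbody
  · rintro ⟨e, he, hev⟩
    exact ⟨.lam M.τm e, .lam he, .app .lam hu hev⟩

namespace ConstructibleFrom

variable {M : Module} {u : Exp}

theorem const (w : Nat) : ConstructibleFrom M u (.const w) .base :=
  ⟨.const w, .const, .const⟩

theorem pair {v₁ v₂ : Exp} {τ₁ τ₂ : Ty} (h₁ : ConstructibleFrom M u v₁ τ₁)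
    (h₂ : ConstructibleFrom M u v₂ τ₂) :
    ConstructibleFrom M u (.pair v₁ v₂) (.prod τ₁ τ₂) :=
  let ⟨e₁, he₁, hev₁⟩ := h₁
  let ⟨e₂, he₂, hev₂⟩ := h₂
  ⟨.pair e₁ e₂, .pair he₁ he₂, .pair hev₁ hev₂⟩

theorem fst {v₁ v₂ : Exp} {τ₁ τ₂ : Ty}
    (h : ConstructibleFrom M u (.pair v₁ v₂) (.prod τ₁ τ₂)) : ConstructibleFrom M u v₁ τ₁ :=
  let ⟨e, he, hev⟩ := h
  ⟨.proj false e, .projl he, .projl hev⟩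

theorem snd {v₁ v₂ : Exp} {τ₁ τ₂ : Ty}
    (h : ConstructibleFrom M u (.pair v₁ v₂) (.prod τ₁ τ₂)) : ConstructibleFrom M u v₂ τ₂ :=
  let ⟨e, he, hev⟩ := h
  ⟨.proj true e, .projr he, .projr hev⟩

theorem app {v v₁ v₂ : Exp} {σ τ : Ty} (h : ConstructibleFrom M u v (.arrow σ τ))
    (h₁ : ConstructibleFrom M u v₁ σ) (hev : Eval (.app v v₁) v₂) :
    ConstructibleFrom M u v₂ τ := by
  obtain ⟨e, he, hevf⟩ := h
  obtain ⟨e₁, he₁, hev₁⟩ := h₁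
  cases hev with
  | app hlam harg hbody =>
    exact ⟨.app e e₁, .app he he₁, .app (hevf.trans hlam) (hev₁.trans harg) hbody⟩

end ConstructibleFrom

theorem Cond.constructibleFrom {M : Module} {u : Exp} {P Q : Exp → Prop} {σ : Ty}
    {v : Exp} (hσ : σ.IsZero) (hP : ∀ x, P x → ConstructibleFrom M u x .abs)
    (hc : Cond M.τc σ Q P v) : ConstructibleFrom M u v σ := by
  induction hσ generalizing v with
  | base =>
    obtain ⟨w, rfl⟩ := hc
    exact .const w
  | abs => exact hP v hc.2
  | prod _ _ ih₁ ih₂ =>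
    obtain ⟨v₁, v₂, rfl, hc₁, hc₂⟩ := hc
    exact (ih₁ hc₁).pair (ih₂ hc₂)

theorem Refute.constructibleFrom {M : Module} {u : Exp} {P Q : Exp → Prop} {v : Exp}
    {τ : Ty} {S V : Set Exp} (h : Refute M.τc P Q v τ S V) (hτ : τ.IsFirst)
    (hv : ConstructibleFrom M u v τ) (hP : ∀ x, P x → ConstructibleFrom M u x .abs) :
    ∀ x ∈ V, ConstructibleFrom M u x .abs := by
  induction h with
  | abs =>
    rintro x rfl
    exact hv
  | prodl _ _ ih => exact ih hτ.prod_inv.1 hv.fst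
  | prodr _ _ ih => exact ih hτ.prod_inv.2 hv.snd
  | fn _ hcond hev _ _ ih =>
    exact ih hτ.arrow_inv.2 (hv.app (hcond.constructibleFrom hτ.arrow_inv.1 hP) hev)

/-- if v is τ-constructible using M, P is α-constructible using M,
and P ▷ Q ⊢ v : τ ⇝ (S, V), then every element of V is α-constructible using M. -/
theorem refute_constructible (M : Module) (P Q : Exp → Prop) (τ : Ty) (v : Exp)
    (S V : Set Exp) (hτ : τ.IsFirst)
    (hv : Constructible M v τ) (hP : ConstructiblePred M P)
    (h : Refute M.τc P Q v τ S V) :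
    ∀ x ∈ V, Constructible M x .abs := by
  obtain ⟨u, hu⟩ : ∃ u, Eval M.vm u := by
    obtain ⟨_, _, hev⟩ := hv
    cases hev with
    | app _ hu _ => exact ⟨_, hu⟩
  have hP' (x : Exp) (hx : P x) : ConstructibleFrom M u x .abs :=
    (constructible_iff_constructibleFrom hu).mp (hP x hx)
  intro x hx
  exact (constructible_iff_constructibleFrom hu).mpr
    (h.constructibleFrom hτ ((constructible_iff_constructibleFrom hu).mp hv) hP' x hx)

end RepInv
end

section
/- If P ▷ Q ⊢ v : τ ⇝ Valid and Q ▷ Q ⊢ v : τ ⇝ (S, V), then there exists x ∈ S with ¬ P x. -/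
/-!  Formalization of the core calculus and definitions from
"Data-Driven Inference of Representation Invariants". -/

namespace RepInv

/-! The first predicate of a refutation never matters, and on a 0-order type `Cond` only looks at
the α-components that `CollectV` gathers. So at a refuted function argument, either some collected
component fails `P` — the witness — or the argument is `Q ▷ P`-valid, and validity of the function
carries the refutation of its result over to a witness by induction. -/

lemma Cond.of_collectV {τc σ : Ty} {A A' Q P : Exp → Prop} {v : Exp} {S : Set Exp}
    (h : Cond τc σ A Q v) (hc : CollectV τc σ v S) (hP : ∀ x ∈ S, P x) :
    Cond τc σ A' P v := by
  induction hc with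
  | base => exact h
  | abs ht => exact ⟨ht, hP _ rfl⟩
  | prod _ _ ih₁ ih₂ =>
    obtain ⟨_, _, ⟨⟩, h₁, h₂⟩ := h
    exact ⟨_, _, rfl, ih₁ h₁ fun x hx => hP x (.inl hx), ih₂ h₂ fun x hx => hP x (.inr hx)⟩

lemma Refute.exists_not_of_cond {τc τ : Ty} {P Q R : Exp → Prop} {v : Exp} {S V : Set Exp}
    (href : Refute τc R Q v τ S V) (hvalid : Cond τc τ P Q v) : ∃ x ∈ S, ¬ P x := by
  induction href with
  | abs _ hQ => exact absurd hvalid.2 hQ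
  | prodl _ _ ih =>
    obtain ⟨_, _, ⟨⟩, h₁, -⟩ := hvalid
    exact ih h₁
  | prodr _ _ ih =>
    obtain ⟨_, _, ⟨⟩, -, h₂⟩ := hvalid
    exact ih h₂
  | fn _ harg heval _ hcol ih =>
    by_contra! hP
    have harg' : Cond τc _ Q P _ := harg.of_collectV hcol fun x hx => hP x (.inl hx)
    obtain ⟨x, hx, hPx⟩ := ih (hvalid.2 _ _ harg' heval)
    exact hPx (hP x (.inr hx))

theorem refute_of_cond_valid_general (τc τ : Ty) (P Q : Exp → Prop) (v : Exp)
    (S V : Set Exp)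
    (hvalid : Cond τc τ P Q v) (href : Refute τc Q Q v τ S V) :
    ∃ x ∈ S, ¬ P x :=
  href.exists_not_of_cond hvalid

/-- if P ▷ Q ⊢ v : τ ⇝ Valid and Q ▷ Q ⊢ v : τ ⇝ (S, V), then
there exists x ∈ S with ¬ P x. -/
theorem refute_of_cond_valid (τc τ : Ty) (P Q : Exp → Prop) (v : Exp)
    (S V : Set Exp) (hτ : τ.IsFirst)
    (hvalid : Cond τc τ P Q v) (href : Refute τc Q Q v τ S V) :
    ∃ x ∈ S, ¬ P x :=
  refute_of_cond_valid_general τc τ P Q v S V hvalid href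

end RepInv
end

section
/- If Verify is sound and NoNegatives I = Valid, then I is a sufficient representation invariant for module M with respect to specification φ (i.e., I is sufficient for φ and M, and I ▷ I ⊢ vm : τm ⇝ Valid). -/
/-!  Formalization of the core calculus and definitions from
"Data-Driven Inference of Representation Invariants". -/

namespace RepInv

theorem noNegatives_eq_valid_iff {φ : Exp → Prop} {Vf : (Exp → Prop) → VResult}
    {CI : (Exp → Prop) → (Exp → Prop) → CIResult} {I : Exp → Prop} :
    NoNegatives φ Vf CI I = .valid ↔ Vf (fun v => I v → φ v) = .valid ∧ CI I I = .valid := by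
  unfold NoNegatives
  rcases Vf (fun v => I v → φ v) with _ | _ <;> rcases CI I I with _ | _ <;> simp

/-- if Verify is sound and NoNegatives I = Valid, then I is a
sufficient representation invariant for M with respect to φ. -/
theorem noNegatives_valid_sound (M : Module) (φ : Exp → Prop)
    (Vf : (Exp → Prop) → VResult) (CI : (Exp → Prop) → (Exp → Prop) → CIResult)
    (hVs : VerifySound M Vf) (hCI : CICorrect M CI)
    (I : Exp → Prop)
    (h : NoNegatives φ Vf CI I = .valid) :
    SuffRepInv M φ I := by
  obtain ⟨hVerify, hCondInductive⟩ := noNegatives_eq_valid_iff.mp h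
  exact ⟨hVs _ hVerify, (hCI I I).1 hCondInductive⟩

end RepInv
end
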